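/- arXiv:2010.01423 — 2 statements merged into one kernel-verified Lean document; each statement's English description precedes it below -/
import Mathlib

section
/- For every integer ℓ ≥ 1 there exists a deterministic threshold network on a finite set V of at most 4ℓ neurons, with ℓ designated input neurons x₀,…,x_{ℓ−1} and ℓ designated output neurons y₀,…,y_{ℓ−1}, with the following property: for every natural number p with p < 2^ℓ, if the external-input function e satisfies e(x_i) = p for every i ∈ {0,…,ℓ−1} and e(u) = 0 for every other neuron u, then for every round τ ≥ 2ℓ + 2, the output neuron y_i fires at round τ if and only if the i-th binary digit of p equals 1. -/
open scoped Classical BigOperators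

/-- Evolution of a deterministic threshold network with weights `w`, biases `b` and
external input `e`, starting from the all-silent state: a neuron fires at round `t+1`
iff the weighted sum of its neighbors' firing indicators at round `t`, plus its external
input, minus its bias, is nonnegative. -/
noncomputable def netEvolve {V : Type*} [Fintype V] (w : V → V → ℝ) (b e : V → ℝ) :
    ℕ → V → Bool
  | 0 => fun _ => false
  | t + 1 => fun u =>
      if 0 ≤ (∑ v, w v u * (if netEvolve w b e t v then (1 : ℝ) else 0)) + e u - b u then
        true
      else false

lemma toNat_div_mod (p j : ℕ) : (p.testBit j).toNat = p / 2 ^ j % 2 := by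
  rw [Nat.testBit_eq_decide_div_mod_eq]
  have h : p / 2 ^ j % 2 = 0 ∨ p / 2 ^ j % 2 = 1 := by omega
  rcases h with h | h <;> simp [h]

lemma bits_sum (p ℓ : ℕ) (hp : p < 2 ^ ℓ) :
    ∀ d, d ≤ ℓ → p % 2 ^ (ℓ - d) + ∑ k ∈ Finset.Ico (ℓ - d) ℓ, 2 ^ k * (p.testBit k).toNat = p := by
  intro d
  induction d with
  | zero => simp [Nat.mod_eq_of_lt hp]
  | succ d ih =>
    intro hd
    set j := ℓ - (d + 1) with hj
    have hjd : j + 1 = ℓ - d := by omega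
    have hjl : j < ℓ := by omega
    rw [Finset.sum_eq_sum_Ico_succ_bot hjl]
    have hmod : p % 2 ^ (j + 1) = p % 2 ^ j + 2 ^ j * (p.testBit j).toNat := by
      rw [pow_succ, Nat.mod_mul, toNat_div_mod]
    have h2 := ih (by omega)
    rw [← hjd, hmod] at h2
    omega

lemma bits_tail (p ℓ j : ℕ) (hp : p < 2 ^ ℓ) (hj : j < ℓ) :
    p % 2 ^ (j + 1) + ∑ k ∈ Finset.Ico (j + 1) ℓ, 2 ^ k * (p.testBit k).toNat = p := by
  have := bits_sum p ℓ hp (ℓ - (j + 1)) (by omega)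
  rwa [show ℓ - (ℓ - (j+1)) = j + 1 by omega] at this

noncomputable def Wnet (ℓ : ℕ) : Fin (2 * ℓ) → Fin (2 * ℓ) → ℝ := fun v u =>
  if (u : ℕ) < ℓ then (if (u : ℕ) < (v : ℕ) ∧ (v : ℕ) < ℓ then -(2 ^ (v : ℕ)) else 0)
  else (if (v : ℕ) + ℓ = (u : ℕ) then 1 else 0)

noncomputable def Bnet (ℓ : ℕ) : Fin (2 * ℓ) → ℝ := fun u =>
  if (u : ℕ) < ℓ then 2 ^ (u : ℕ) else 1

lemma input_state (ℓ : ℕ) (hℓ : 1 ≤ ℓ) (p : ℕ) (hp : p < 2 ^ ℓ) (e : Fin (2 * ℓ) → ℝ)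
    (hex : ∀ k (hk : k < ℓ), e ⟨k, by omega⟩ = p)
    (t : ℕ) :
    ∀ j (hj : j < ℓ), ℓ - j ≤ t → netEvolve (Wnet ℓ) (Bnet ℓ) e t ⟨j, by omega⟩ = p.testBit j := by
  induction t with
  | zero => intro j hj ht; omega
  | succ t ih =>
    intro j hj ht
    simp only [netEvolve]
    have hsum : (∑ v : Fin (2 * ℓ), Wnet ℓ v ⟨j, by omega⟩ *
        (if netEvolve (Wnet ℓ) (Bnet ℓ) e t v then (1 : ℝ) else 0))
        = -((∑ k ∈ Finset.Ico (j + 1) ℓ, 2 ^ k * (p.testBit k).toNat : ℕ) : ℝ) := by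
      have step1 : ∀ v : Fin (2 * ℓ), Wnet ℓ v ⟨j, by omega⟩ *
          (if netEvolve (Wnet ℓ) (Bnet ℓ) e t v then (1 : ℝ) else 0)
          = if j < (v : ℕ) ∧ (v : ℕ) < ℓ then
              -((2 : ℝ) ^ (v : ℕ) * ((p.testBit (v : ℕ)).toNat : ℝ)) else 0 := by
        intro v
        by_cases hv : j < (v : ℕ) ∧ (v : ℕ) < ℓ
        · have hbit : netEvolve (Wnet ℓ) (Bnet ℓ) e t v = p.testBit (v : ℕ) := by
            have := ih (v : ℕ) hv.2 (by omega)
            simpa using this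
          simp only [Wnet, hj, if_pos, hv, and_self, if_true, hbit]
          cases hb : p.testBit (v : ℕ) <;> simp
        · simp [Wnet, hj, hv]
      rw [Finset.sum_congr rfl (fun v _ => step1 v)]
      rw [Fin.sum_univ_eq_sum_range
        (fun k => if j < k ∧ k < ℓ then -((2 : ℝ) ^ k * ((p.testBit k).toNat : ℝ)) else 0)]
      rw [← Finset.sum_filter]
      have hfil : (Finset.range (2 * ℓ)).filter (fun k => j < k ∧ k < ℓ)
          = Finset.Ico (j + 1) ℓ := by
        ext k; simp [Finset.mem_filter, Finset.mem_range, Finset.mem_Ico]; omega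
      rw [hfil]
      push_cast
      rw [← Finset.sum_neg_distrib]
    rw [hsum, hex j hj]
    have hb : Bnet ℓ ⟨j, by omega⟩ = 2 ^ j := by simp [Bnet, hj]
    rw [hb]
    have hps := bits_tail p ℓ j hp hj
    set s := ∑ k ∈ Finset.Ico (j + 1) ℓ, 2 ^ k * (p.testBit k).toNat with hs
    have hmod : p % 2 ^ (j + 1) = p % 2 ^ j + 2 ^ j * (p.testBit j).toNat := by
      rw [pow_succ, Nat.mod_mul, toNat_div_mod]
    have hlt : p % 2 ^ j < 2 ^ j := Nat.mod_lt _ (by positivity)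
    have hcast : -(s : ℝ) + (p : ℝ) - 2 ^ j = ((p % 2 ^ (j + 1) : ℕ) : ℝ) - 2 ^ j := by
      have : ((p % 2 ^ (j + 1) : ℕ) : ℝ) + (s : ℝ) = p := by exact_mod_cast congrArg Nat.cast hps
      linarith
    rw [hcast]
    cases hbit : p.testBit j with
    | true =>
      rw [if_pos]
      have : 2 ^ j ≤ p % 2 ^ (j + 1) := by rw [hmod, hbit]; simp only [Bool.toNat_true]; omega
      have h2 : ((2 : ℝ) ^ j) ≤ ((p % 2 ^ (j + 1) : ℕ) : ℝ) := by exact_mod_cast this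
      linarith
    | false =>
      rw [if_neg]
      have : p % 2 ^ (j + 1) < 2 ^ j := by rw [hmod, hbit]; simpa using hlt
      have h2 : ((p % 2 ^ (j + 1) : ℕ) : ℝ) < (2 : ℝ) ^ j := by exact_mod_cast this
      linarith

lemma output_state (ℓ : ℕ) (hℓ : 1 ≤ ℓ) (p : ℕ) (hp : p < 2 ^ ℓ) (e : Fin (2 * ℓ) → ℝ)
    (hex : ∀ k (hk : k < ℓ), e ⟨k, by omega⟩ = p)
    (he0 : ∀ u : Fin (2 * ℓ), ℓ ≤ (u : ℕ) → e u = 0)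
    (t : ℕ) (ht : ℓ + 1 ≤ t) (i : ℕ) (hi : i < ℓ) :
    netEvolve (Wnet ℓ) (Bnet ℓ) e t ⟨ℓ + i, by omega⟩ = p.testBit i := by
  obtain ⟨t', rfl⟩ : ∃ t', t = t' + 1 := ⟨t - 1, by omega⟩
  simp only [netEvolve]
  set xi : Fin (2 * ℓ) := ⟨i, by omega⟩ with hxi
  have step1 : ∀ v : Fin (2 * ℓ), Wnet ℓ v ⟨ℓ + i, by omega⟩ *
      (if netEvolve (Wnet ℓ) (Bnet ℓ) e t' v then (1 : ℝ) else 0)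
      = if v = xi then (if netEvolve (Wnet ℓ) (Bnet ℓ) e t' v then (1 : ℝ) else 0) else 0 := by
    intro v
    have hcond : ((v : ℕ) + ℓ = ℓ + i) ↔ v = xi := by
      rw [Fin.ext_iff]; simp [hxi]; omega
    by_cases hv : v = xi
    · simp [Wnet, hv, hxi, hcond, show ¬ (ℓ + i < ℓ) by omega, Nat.add_comm]
    · have : ¬ ((v : ℕ) + ℓ = ℓ + i) := fun h => hv (hcond.mp h)
      simp [Wnet, this, hv, show ¬ (ℓ + i < ℓ) by omega]
  rw [Finset.sum_congr rfl (fun v _ => step1 v),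
    Finset.sum_ite_eq' Finset.univ xi
      (fun v => if netEvolve (Wnet ℓ) (Bnet ℓ) e t' v then (1 : ℝ) else 0)]
  have hbit : netEvolve (Wnet ℓ) (Bnet ℓ) e t' xi = p.testBit i :=
    input_state ℓ hℓ p hp e hex t' i hi (by omega)
  have he : e ⟨ℓ + i, by omega⟩ = 0 := he0 _ (by simp)
  have hb : Bnet ℓ ⟨ℓ + i, by omega⟩ = 1 := by simp [Bnet]
  rw [he, hb, if_pos (Finset.mem_univ xi), hbit]
  cases p.testBit i <;> norm_num

/-- Potential-encoding lemma: for every `ℓ ≥ 1` there is a deterministic threshold network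
on at most `4ℓ` neurons, with `ℓ` input neurons and `ℓ` output neurons, such that whenever
the external input is `p < 2^ℓ` on all input neurons and `0` elsewhere, from round `2ℓ+2`
onwards the `i`-th output neuron fires iff the `i`-th binary digit of `p` is `1`. -/
theorem potential_encoding (ℓ : ℕ) (hℓ : 1 ≤ ℓ) :
    ∃ (N : ℕ) (w : Fin N → Fin N → ℝ) (b : Fin N → ℝ) (x y : Fin ℓ → Fin N),
      N ≤ 4 * ℓ ∧ Function.Injective x ∧ Function.Injective y ∧
      ∀ p : ℕ, p < 2 ^ ℓ →
        ∀ e : Fin N → ℝ,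
          (∀ i : Fin ℓ, e (x i) = (p : ℝ)) →
          (∀ u : Fin N, u ∉ Set.range x → e u = 0) →
          ∀ τ : ℕ, 2 * ℓ + 2 ≤ τ →
            ∀ i : Fin ℓ, netEvolve w b e τ (y i) = p.testBit i := by
  refine ⟨2 * ℓ, Wnet ℓ, Bnet ℓ, fun i => ⟨(i : ℕ), by omega⟩, fun i => ⟨ℓ + (i : ℕ), by omega⟩,
    by omega, ?_, ?_, ?_⟩
  · intro a c h
    rw [Fin.ext_iff] at h ⊢
    simpa using h
  · intro a c h
    rw [Fin.ext_iff] at h ⊢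
    simp at h
    omega
  · intro p hp e hex he0 τ hτ i
    have hex' : ∀ k (hk : k < ℓ), e ⟨k, by omega⟩ = p := fun k hk => hex ⟨k, hk⟩
    have he0' : ∀ u : Fin (2 * ℓ), ℓ ≤ (u : ℕ) → e u = 0 := by
      intro u hu
      apply he0
      rintro ⟨k, rfl⟩
      have : (k : ℕ) < ℓ := k.isLt
      simp at hu
      omega
    exact output_state ℓ hℓ p hp e hex' he0' τ (by omega) i i.isLt
end

section
/- Fix positive integers n and b, a frequency vector f : Fin n → ℕ with total mass m = Σ_y f(y), and for a hash function h : Fin n → Fin b define the counter table T_h : Fin b → ℕ by T_h(j) = Σ_{y : h(y) = j} f(y). Then: (i) for every function h : Fin n → Fin b and every x ∈ Fin n, T_h(h(x)) ≥ f(x); and (ii) if μ is a probability distribution on functions h : Fin n → Fin b with collision probability at most 1/b, then for every x ∈ Fin n, the expectation E_{h∼μ}[T_h(h(x))] is at most f(x) + m/b (as real numbers). -/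
/-! Expanding the counter and exchanging the sums gives
`E[T_h(h x)] = ∑_y f(y) · Pr[h y = h x]`: the term `y = x` contributes exactly `f(x)`,
and every other term at most `f(y)/b`. -/

open scoped BigOperators

def cmTable (n b : ℕ) (f : Fin n → ℕ) (h : Fin n → Fin b) (j : Fin b) : ℕ :=
  ∑ y ∈ Finset.univ.filter (fun y => h y = j), f y

open Finset

noncomputable def collisionProb {α β : Type*} [Fintype α] [DecidableEq α] [Fintype β]
    [DecidableEq β] (μ : (α → β) → ℝ) (x y : α) : ℝ :=
  ∑ h : α → β, if h x = h y then μ h else 0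

lemma collisionProb_self {α β : Type*} [Fintype α] [DecidableEq α] [Fintype β]
    [DecidableEq β] (μ : (α → β) → ℝ) (x : α) :
    collisionProb μ x x = ∑ h, μ h := by
  simp [collisionProb]

lemma sum_mul_le_add_mul_sum {ι : Type*} [Fintype ι] [DecidableEq ι] {w p : ι → ℝ} {c : ℝ}
    (x : ι) (hw : ∀ y, 0 ≤ w y) (hc : 0 ≤ c) (hpx : p x = 1) (hp : ∀ y, y ≠ x → p y ≤ c) :
    ∑ y, w y * p y ≤ w x + c * ∑ y, w y := by
  calc ∑ y, w y * p y = w x + ∑ y ∈ univ.erase x, w y * p y := by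
        rw [← add_sum_erase _ _ (mem_univ x), hpx, mul_one]
    _ ≤ w x + ∑ y ∈ univ.erase x, w y * c := by
        gcongr with y hy
        exacts [hw y, hp y (ne_of_mem_erase hy)]
    _ ≤ w x + c * ∑ y, w y := by
        rw [← sum_mul, mul_comm]
        gcongr
        exacts [fun y _ _ => hw y, erase_subset x univ]

section CountMin

variable {n b : ℕ} (f : Fin n → ℕ)

lemma le_cmTable_apply (h : Fin n → Fin b) (x : Fin n) : f x ≤ cmTable n b f h (h x) :=
  single_le_sum (fun _ _ => Nat.zero_le _) (by simp)

lemma cast_cmTable (h : Fin n → Fin b) (j : Fin b) :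
    (cmTable n b f h j : ℝ) = ∑ y, if h y = j then (f y : ℝ) else 0 := by
  simp [cmTable, sum_filter]

lemma sum_mul_cmTable_apply (μ : (Fin n → Fin b) → ℝ) (x : Fin n) :
    ∑ h, μ h * (cmTable n b f h (h x) : ℝ) = ∑ y, (f y : ℝ) * collisionProb μ y x := by
  simp_rw [cast_cmTable, collisionProb, mul_sum, mul_ite, mul_zero]
  rw [sum_comm]
  simp_rw [mul_comm]

end CountMin

theorem count_min_single_row_general (n b : ℕ) (f : Fin n → ℕ) :
    (∀ (h : Fin n → Fin b) (x : Fin n), f x ≤ cmTable n b f h (h x)) ∧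
    (∀ μ : (Fin n → Fin b) → ℝ, (∀ h, 0 ≤ μ h) → (∑ h : Fin n → Fin b, μ h) = 1 →
      (∀ x y : Fin n, x ≠ y →
        (∑ h : Fin n → Fin b, if h x = h y then μ h else 0) ≤ 1 / (b : ℝ)) →
      ∀ x : Fin n,
        (∑ h : Fin n → Fin b, μ h * (cmTable n b f h (h x) : ℝ)) ≤
          (f x : ℝ) + ((∑ y : Fin n, f y : ℕ) : ℝ) / (b : ℝ)) := by
  refine ⟨le_cmTable_apply f, fun μ _ hμ hcol x => ?_⟩
  rw [sum_mul_cmTable_apply, div_eq_mul_one_div, mul_comm, Nat.cast_sum]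
  exact sum_mul_le_add_mul_sum x (fun y => Nat.cast_nonneg _) (by positivity)
    (by rw [collisionProb_self, hμ]) (fun y hy => hcol y x hy)

/-- Single-row analysis of the Count-Min sketch: (i) the counter at `h x` always
overestimates the frequency of `x`; (ii) if `h` is drawn from a distribution with
collision probability at most `1/b`, the expected counter at `h x` is at most
`f x + m/b`, where `m` is the total mass. -/
theorem count_min_single_row (n b : ℕ) (hn : 0 < n) (hb : 0 < b) (f : Fin n → ℕ) :
    (∀ (h : Fin n → Fin b) (x : Fin n), f x ≤ cmTable n b f h (h x)) ∧
    (∀ μ : (Fin n → Fin b) → ℝ, (∀ h, 0 ≤ μ h) → (∑ h : Fin n → Fin b, μ h) = 1 →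
      (∀ x y : Fin n, x ≠ y →
        (∑ h : Fin n → Fin b, if h x = h y then μ h else 0) ≤ 1 / (b : ℝ)) →
      ∀ x : Fin n,
        (∑ h : Fin n → Fin b, μ h * (cmTable n b f h (h x) : ℝ)) ≤
          (f x : ℝ) + ((∑ y : Fin n, f y : ℕ) : ℝ) / (b : ℝ)) :=
  count_min_single_row_general n b f
end
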